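/- arXiv:1512.09286 — 4 statements merged into one kernel-verified Lean document; each statement's English description precedes it below -/
import Mathlib

section
/- For every finite connected subset A of ℤ² with n ≥ 1 points, the edge perimeter of A (the number of pairs (x,y) with x ∈ A, y ∉ A, and ‖x−y‖ = 1) is at least 4√n. -/
/-- The four nearest neighbors of a site of `ℤ²` (Euclidean distance 1). -/
def nbrs (x : ℤ × ℤ) : Finset (ℤ × ℤ) :=
  {(x.1 + 1, x.2), (x.1 - 1, x.2), (x.1, x.2 + 1), (x.1, x.2 - 1)}

/-- The (edge) perimeter of a finite subset `A` of `ℤ²`: the number of ordered pairs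
`(x, y)` with `x ∈ A`, `y ∉ A` and `‖x - y‖ = 1`. -/
def perim (A : Finset (ℤ × ℤ)) : ℕ :=
  ∑ x ∈ A, ((nbrs x).filter (fun y => y ∉ A)).card

/-- `A ⊂ ℤ²` is connected: any two points of `A` are joined by a nearest-neighbor
path staying inside `A`. -/
def Conn (A : Finset (ℤ × ℤ)) : Prop :=
  ∀ x ∈ A, ∀ y ∈ A, Relation.ReflTransGen (fun u v => u ∈ A ∧ v ∈ A ∧ v ∈ nbrs u) x y

open Finset

lemma finmax_spec (S : Finset ℤ) (hne : S.Nonempty) :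
    S.max.unbotD 0 ∈ S ∧ ∀ a ∈ S, a ≤ S.max.unbotD 0 := by
  obtain ⟨m, hm⟩ := S.max_of_nonempty hne
  rw [hm]
  refine ⟨mem_of_max hm, fun a ha => ?_⟩
  have := le_max ha
  rw [hm] at this
  exact_mod_cast this

lemma finmin_spec (S : Finset ℤ) (hne : S.Nonempty) :
    S.min.untopD 0 ∈ S ∧ ∀ a ∈ S, S.min.untopD 0 ≤ a := by
  obtain ⟨m, hm⟩ := S.min_of_nonempty hne
  rw [hm]
  refine ⟨mem_of_min hm, fun a ha => ?_⟩
  have := min_le ha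
  rw [hm] at this
  exact_mod_cast this

/-- The set of boundary edges, as ordered pairs. -/
def bedges (A : Finset (ℤ × ℤ)) : Finset ((ℤ × ℤ) × (ℤ × ℤ)) :=
  A.biUnion fun x => ((nbrs x).filter (fun y => y ∉ A)).image (fun y => (x, y))

lemma mem_bedges {A : Finset (ℤ × ℤ)} {p : (ℤ × ℤ) × (ℤ × ℤ)} :
    p ∈ bedges A ↔ p.1 ∈ A ∧ p.2 ∈ nbrs p.1 ∧ p.2 ∉ A := by
  obtain ⟨x, y⟩ := p
  simp only [bedges, mem_biUnion, mem_image, mem_filter, Prod.mk.injEq]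
  constructor
  · rintro ⟨a, ha, b, ⟨hb1, hb2⟩, rfl, rfl⟩; exact ⟨ha, hb1, hb2⟩
  · rintro ⟨h1, h2, h3⟩; exact ⟨x, h1, y, ⟨h2, h3⟩, rfl, rfl⟩

lemma perim_eq_card (A : Finset (ℤ × ℤ)) : perim A = (bedges A).card := by
  rw [bedges, card_biUnion]
  · exact Finset.sum_congr rfl fun x _ =>
      (card_image_of_injective _ (fun a b h => (Prod.ext_iff.mp h).2)).symm
  · intro x hx y hy hxy
    simp only [disjoint_left, mem_image, mem_filter]
    rintro p ⟨a, _, rfl⟩ ⟨b, _, h⟩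
    exact hxy ((Prod.ext_iff.mp h).1).symm

def colMax (A : Finset (ℤ × ℤ)) (c : ℤ) : ℤ :=
  (((A.filter (fun p => p.1 = c)).image Prod.snd).max).unbotD 0

def colMin (A : Finset (ℤ × ℤ)) (c : ℤ) : ℤ :=
  (((A.filter (fun p => p.1 = c)).image Prod.snd).min).untopD 0

def rowMax (A : Finset (ℤ × ℤ)) (r : ℤ) : ℤ :=
  (((A.filter (fun p => p.2 = r)).image Prod.fst).max).unbotD 0

def rowMin (A : Finset (ℤ × ℤ)) (r : ℤ) : ℤ :=
  (((A.filter (fun p => p.2 = r)).image Prod.fst).min).untopD 0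

lemma col_nonempty {A : Finset (ℤ × ℤ)} {c : ℤ} (hc : c ∈ A.image Prod.fst) :
    ((A.filter (fun p => p.1 = c)).image Prod.snd).Nonempty := by
  obtain ⟨p, hp, rfl⟩ := mem_image.mp hc
  exact ⟨p.2, mem_image.mpr ⟨p, mem_filter.mpr ⟨hp, rfl⟩, rfl⟩⟩

lemma row_nonempty {A : Finset (ℤ × ℤ)} {r : ℤ} (hr : r ∈ A.image Prod.snd) :
    ((A.filter (fun p => p.2 = r)).image Prod.fst).Nonempty := by
  obtain ⟨p, hp, rfl⟩ := mem_image.mp hr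
  exact ⟨p.1, mem_image.mpr ⟨p, mem_filter.mpr ⟨hp, rfl⟩, rfl⟩⟩

lemma colMax_spec {A : Finset (ℤ × ℤ)} {c : ℤ} (hc : c ∈ A.image Prod.fst) :
    (c, colMax A c) ∈ A ∧ ∀ p ∈ A, p.1 = c → p.2 ≤ colMax A c := by
  obtain ⟨hmem, hle⟩ := finmax_spec _ (col_nonempty hc)
  constructor
  · obtain ⟨p, hp, hp2⟩ := mem_image.mp hmem
    obtain ⟨hpA, hp1⟩ := mem_filter.mp hp
    have : p = (c, colMax A c) := Prod.ext hp1 hp2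
    rwa [this] at hpA
  · intro p hp h1
    exact hle p.2 (mem_image.mpr ⟨p, mem_filter.mpr ⟨hp, h1⟩, rfl⟩)

lemma colMin_spec {A : Finset (ℤ × ℤ)} {c : ℤ} (hc : c ∈ A.image Prod.fst) :
    (c, colMin A c) ∈ A ∧ ∀ p ∈ A, p.1 = c → colMin A c ≤ p.2 := by
  obtain ⟨hmem, hle⟩ := finmin_spec _ (col_nonempty hc)
  constructor
  · obtain ⟨p, hp, hp2⟩ := mem_image.mp hmem
    obtain ⟨hpA, hp1⟩ := mem_filter.mp hp
    have : p = (c, colMin A c) := Prod.ext hp1 hp2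
    rwa [this] at hpA
  · intro p hp h1
    exact hle p.2 (mem_image.mpr ⟨p, mem_filter.mpr ⟨hp, h1⟩, rfl⟩)

lemma rowMax_spec {A : Finset (ℤ × ℤ)} {r : ℤ} (hr : r ∈ A.image Prod.snd) :
    (rowMax A r, r) ∈ A ∧ ∀ p ∈ A, p.2 = r → p.1 ≤ rowMax A r := by
  obtain ⟨hmem, hle⟩ := finmax_spec _ (row_nonempty hr)
  constructor
  · obtain ⟨p, hp, hp1⟩ := mem_image.mp hmem
    obtain ⟨hpA, hp2⟩ := mem_filter.mp hp
    have : p = (rowMax A r, r) := Prod.ext hp1 hp2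
    rwa [this] at hpA
  · intro p hp h2
    exact hle p.1 (mem_image.mpr ⟨p, mem_filter.mpr ⟨hp, h2⟩, rfl⟩)

lemma rowMin_spec {A : Finset (ℤ × ℤ)} {r : ℤ} (hr : r ∈ A.image Prod.snd) :
    (rowMin A r, r) ∈ A ∧ ∀ p ∈ A, p.2 = r → rowMin A r ≤ p.1 := by
  obtain ⟨hmem, hle⟩ := finmin_spec _ (row_nonempty hr)
  constructor
  · obtain ⟨p, hp, hp1⟩ := mem_image.mp hmem
    obtain ⟨hpA, hp2⟩ := mem_filter.mp hp
    have : p = (rowMin A r, r) := Prod.ext hp1 hp2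
    rwa [this] at hpA
  · intro p hp h2
    exact hle p.1 (mem_image.mpr ⟨p, mem_filter.mpr ⟨hp, h2⟩, rfl⟩)

lemma two_wh_le_perim (A : Finset (ℤ × ℤ)) :
    2 * (A.image Prod.fst).card + 2 * (A.image Prod.snd).card ≤ perim A := by
  classical
  set W := A.image Prod.fst with hW
  set H := A.image Prod.snd with hH
  set T : Finset ((ℤ × ℤ) × (ℤ × ℤ)) :=
    W.image (fun c => ((c, colMax A c), (c, colMax A c + 1))) with hT
  set B : Finset ((ℤ × ℤ) × (ℤ × ℤ)) :=
    W.image (fun c => ((c, colMin A c), (c, colMin A c - 1))) with hB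
  set R : Finset ((ℤ × ℤ) × (ℤ × ℤ)) :=
    H.image (fun r => ((rowMax A r, r), (rowMax A r + 1, r))) with hR
  set L : Finset ((ℤ × ℤ) × (ℤ × ℤ)) :=
    H.image (fun r => ((rowMin A r, r), (rowMin A r - 1, r))) with hL
  -- characterizations of members
  have memT : ∀ p ∈ T, p.2.1 = p.1.1 ∧ p.2.2 = p.1.2 + 1 := by
    intro p hp; obtain ⟨c, _, rfl⟩ := mem_image.mp hp; exact ⟨rfl, rfl⟩
  have memB : ∀ p ∈ B, p.2.1 = p.1.1 ∧ p.2.2 = p.1.2 - 1 := by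
    intro p hp; obtain ⟨c, _, rfl⟩ := mem_image.mp hp; exact ⟨rfl, rfl⟩
  have memR : ∀ p ∈ R, p.2.1 = p.1.1 + 1 ∧ p.2.2 = p.1.2 := by
    intro p hp; obtain ⟨r, _, rfl⟩ := mem_image.mp hp; exact ⟨rfl, rfl⟩
  have memL : ∀ p ∈ L, p.2.1 = p.1.1 - 1 ∧ p.2.2 = p.1.2 := by
    intro p hp; obtain ⟨r, _, rfl⟩ := mem_image.mp hp; exact ⟨rfl, rfl⟩
  -- all subsets of bedges
  have hTs : T ⊆ bedges A := by
    intro p hp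
    obtain ⟨c, hc, rfl⟩ := mem_image.mp hp
    obtain ⟨hmem, hle⟩ := colMax_spec hc
    refine mem_bedges.mpr ⟨hmem, ?_, ?_⟩
    · simp [nbrs]
    · intro hcontra
      have := hle _ hcontra rfl
      dsimp only at this
      omega
  have hBs : B ⊆ bedges A := by
    intro p hp
    obtain ⟨c, hc, rfl⟩ := mem_image.mp hp
    obtain ⟨hmem, hle⟩ := colMin_spec hc
    refine mem_bedges.mpr ⟨hmem, ?_, ?_⟩
    · simp [nbrs]
    · intro hcontra
      have := hle _ hcontra rfl
      dsimp only at this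
      omega
  have hRs : R ⊆ bedges A := by
    intro p hp
    obtain ⟨r, hr, rfl⟩ := mem_image.mp hp
    obtain ⟨hmem, hle⟩ := rowMax_spec hr
    refine mem_bedges.mpr ⟨hmem, ?_, ?_⟩
    · simp [nbrs]
    · intro hcontra
      have := hle _ hcontra rfl
      dsimp only at this
      omega
  have hLs : L ⊆ bedges A := by
    intro p hp
    obtain ⟨r, hr, rfl⟩ := mem_image.mp hp
    obtain ⟨hmem, hle⟩ := rowMin_spec hr
    refine mem_bedges.mpr ⟨hmem, ?_, ?_⟩
    · simp [nbrs]
    · intro hcontra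
      have := hle _ hcontra rfl
      dsimp only at this
      omega
  -- cardinalities
  have cT : T.card = W.card := by
    rw [hT, card_image_of_injOn]
    intro a _ b _ h
    exact (Prod.ext_iff.mp (Prod.ext_iff.mp h).1).1
  have cB : B.card = W.card := by
    rw [hB, card_image_of_injOn]
    intro a _ b _ h
    exact (Prod.ext_iff.mp (Prod.ext_iff.mp h).1).1
  have cR : R.card = H.card := by
    rw [hR, card_image_of_injOn]
    intro a _ b _ h
    exact (Prod.ext_iff.mp (Prod.ext_iff.mp h).1).2
  have cL : L.card = H.card := by
    rw [hL, card_image_of_injOn]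
    intro a _ b _ h
    exact (Prod.ext_iff.mp (Prod.ext_iff.mp h).1).2
  -- disjointness
  have dTB : Disjoint T B := by
    rw [disjoint_left]; intro p hp hq
    have h1 := (memT p hp).2; have h2 := (memB p hq).2; omega
  have dTR : Disjoint T R := by
    rw [disjoint_left]; intro p hp hq
    have h1 := (memT p hp).2; have h2 := (memR p hq).2; omega
  have dTL : Disjoint T L := by
    rw [disjoint_left]; intro p hp hq
    have h1 := (memT p hp).2; have h2 := (memL p hq).2; omega
  have dBR : Disjoint B R := by
    rw [disjoint_left]; intro p hp hq
    have h1 := (memB p hp).2; have h2 := (memR p hq).2; omega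
  have dBL : Disjoint B L := by
    rw [disjoint_left]; intro p hp hq
    have h1 := (memB p hp).2; have h2 := (memL p hq).2; omega
  have dRL : Disjoint R L := by
    rw [disjoint_left]; intro p hp hq
    have h1 := (memR p hp).1; have h2 := (memL p hq).1; omega
  have hsub : T ∪ B ∪ R ∪ L ⊆ bedges A := by
    intro p hp
    rcases mem_union.mp hp with hp | hp
    · rcases mem_union.mp hp with hp | hp
      · rcases mem_union.mp hp with hp | hp
        · exact hTs hp
        · exact hBs hp
      · exact hRs hp
    · exact hLs hp
  have hcardu : (T ∪ B ∪ R ∪ L).card = T.card + B.card + R.card + L.card := by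
    rw [card_union_of_disjoint, card_union_of_disjoint, card_union_of_disjoint dTB]
    · exact disjoint_union_left.mpr ⟨dTR, dBR⟩
    · exact disjoint_union_left.mpr ⟨disjoint_union_left.mpr ⟨dTL, dBL⟩, dRL⟩
  calc 2 * W.card + 2 * H.card = T.card + B.card + R.card + L.card := by
        rw [cT, cB, cR, cL]; ring
    _ = (T ∪ B ∪ R ∪ L).card := hcardu.symm
    _ ≤ (bedges A).card := card_le_card hsub
    _ = perim A := (perim_eq_card A).symm

lemma card_le_wh (A : Finset (ℤ × ℤ)) :
    A.card ≤ (A.image Prod.fst).card * (A.image Prod.snd).card := by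
  calc A.card ≤ ((A.image Prod.fst) ×ˢ (A.image Prod.snd)).card := by
        apply card_le_card
        intro p hp
        exact mem_product.mpr ⟨mem_image_of_mem _ hp, mem_image_of_mem _ hp⟩
    _ = (A.image Prod.fst).card * (A.image Prod.snd).card := card_product _ _

/-- Every finite connected subset of `ℤ²` with `n ≥ 1` points has perimeter at least `4√n`. -/
theorem perim_ge_four_sqrt (A : Finset (ℤ × ℤ)) (n : ℕ) (hn : 1 ≤ n)
    (hcard : A.card = n) (hconn : Conn A) :
    (4 : ℝ) * Real.sqrt n ≤ (perim A : ℝ) := by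
  set w := (A.image Prod.fst).card
  set h := (A.image Prod.snd).card
  have h1 : n ≤ w * h := hcard ▸ card_le_wh A
  have h2 : 2 * w + 2 * h ≤ perim A := two_wh_le_perim A
  have hw : (0:ℝ) ≤ (w:ℝ) := Nat.cast_nonneg w
  have hh : (0:ℝ) ≤ (h:ℝ) := Nat.cast_nonneg h
  set a := Real.sqrt w with ha
  set b := Real.sqrt h with hb
  have ha2 : a ^ 2 = w := Real.sq_sqrt hw
  have hb2 : b ^ 2 = h := Real.sq_sqrt hh
  have hsn : Real.sqrt n ≤ a * b := by
    rw [ha, hb, ← Real.sqrt_mul hw]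
    apply Real.sqrt_le_sqrt
    exact_mod_cast h1
  have hperim : (2:ℝ) * w + 2 * h ≤ (perim A : ℝ) := by exact_mod_cast h2
  have hane : 0 ≤ a := Real.sqrt_nonneg _
  have hbne : 0 ≤ b := Real.sqrt_nonneg _
  nlinarith [sq_nonneg (a - b), Real.sqrt_nonneg (n:ℝ)]
end

section
/- Let a ≤ b be positive integers with a ≤ n₀ and ab ≥ n₀(n₀+1), where n₀ ≥ 2. Then 2(a+b) ≥ 4(n₀+1) unless (a,b) = (n₀, n₀+1). -/
/-- Arithmetic core of the isoperimetric classification: if `a ≤ b` are positive integers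
with `a ≤ n₀` and `a·b ≥ n₀(n₀+1)` (`n₀ ≥ 2`), then `2(a+b) ≥ 4(n₀+1)` unless
`(a, b) = (n₀, n₀+1)`. -/
theorem rectangle_semiperimeter_bound (n₀ a b : ℕ) (hn₀ : 2 ≤ n₀) (ha : 0 < a)
    (hab : a ≤ b) (han : a ≤ n₀) (hvol : n₀ * (n₀ + 1) ≤ a * b)
    (hne : ¬(a = n₀ ∧ b = n₀ + 1)) :
    4 * (n₀ + 1) ≤ 2 * (a + b) := by
  rcases eq_or_lt_of_le han with rfl | hlt
  · have hb : a + 1 ≤ b := by nlinarith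
    have hb' : b ≠ a + 1 := fun h => hne ⟨rfl, h⟩
    omega
  · by_contra h
    push_neg at h
    have h1 : a + b ≤ 2 * n₀ + 1 := by omega
    zify at *
    nlinarith [mul_pos (show (0:ℤ) < (n₀:ℤ) - a by omega)
      (show (0:ℤ) < (n₀:ℤ) + 1 - a by omega)]
end

section
/- Let (X_t) be an irreducible continuous-time Markov chain on a finite state space E. For disjoint sets A, B ⊂ E and a state x ∉ A ∪ B, the probability of hitting A before B satisfies P_x[H_A < H_B] = P_x[H_A < H⁺_{B∪{x}}] / P_x[H_{A∪B} < H⁺_x], where H_C is the hitting time of C and H⁺_C is the return time to C (the first time in C after the first jump). -/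
/-- `u y = P_y[H_A < H_B]`, the hitting probabilities of `A` before `B` for the Markov
chain with jump matrix `p`: `u = 1` on `A`, `u = 0` on `B`, and `u` is harmonic elsewhere.
(For a finite irreducible chain this characterizes the hitting probabilities; the hitting
probabilities of a continuous-time chain coincide with those of its embedded jump chain.) -/
def IsHittingProb {E : Type*} [Fintype E] (p : Matrix E E ℝ) (A B : Finset E)
    (u : E → ℝ) : Prop :=
  (∀ x ∈ A, u x = 1) ∧ (∀ x ∈ B, x ∉ A → u x = 0) ∧
    ∀ x, x ∉ A → x ∉ B → u x = ∑ y, p x y * u y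

lemma pow_entry_nonneg {E : Type*} [Fintype E] [DecidableEq E]
    (p : Matrix E E ℝ) (hnn : ∀ x y, 0 ≤ p x y) :
    ∀ n x y, 0 ≤ (p ^ n) x y := by
  intro n
  induction n with
  | zero => intro x y; simp [Matrix.one_apply]; positivity
  | succ n ih =>
      intro x y
      rw [pow_succ, Matrix.mul_apply]
      exact Finset.sum_nonneg fun t _ => mul_nonneg (ih x t) (hnn t y)

lemma closed_reach {E : Type*} [Fintype E] [DecidableEq E]
    (p : Matrix E E ℝ) (hnn : ∀ x y, 0 ≤ p x y)
    (S : Set E) (hS : ∀ a ∈ S, ∀ b, 0 < p a b → b ∈ S) :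
    ∀ n a b, a ∈ S → 0 < (p ^ n) a b → b ∈ S := by
  intro n
  induction n with
  | zero =>
      intro a b ha hpos
      simp [Matrix.one_apply] at hpos
      split_ifs at hpos with h
      · exact h ▸ ha
      · norm_num at hpos
  | succ n ih =>
      intro a b ha hpos
      rw [pow_succ, Matrix.mul_apply] at hpos
      obtain ⟨t, -, ht⟩ := Finset.exists_ne_zero_of_sum_ne_zero hpos.ne'
      have h1 : 0 < (p ^ n) a t := lt_of_le_of_ne (pow_entry_nonneg p hnn n a t)
        (fun h => ht (by rw [← h, zero_mul]))
      have h2 : 0 < p t b := lt_of_le_of_ne (hnn t b)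
        (fun h => ht (by rw [← h, mul_zero]))
      exact hS t (ih a t ha h1) b h2

lemma boundary_min {E : Type*} [Fintype E] [DecidableEq E]
    (p : Matrix E E ℝ) (hnn : ∀ x y, 0 ≤ p x y) (hrow : ∀ x, ∑ y, p x y = 1)
    (hirr : ∀ x y : E, ∃ n : ℕ, 0 < (p ^ n) x y)
    (C : Finset E) (hC : C.Nonempty) (f : E → ℝ)
    (hf : ∀ y, y ∉ C → f y = ∑ t, p y t * f t) :
    ∃ c ∈ C, ∀ y, f c ≤ f y := by
  obtain ⟨c₀, hc₀⟩ := hC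
  obtain ⟨y₀, -, hy₀⟩ := Finset.exists_min_image Finset.univ f ⟨c₀, Finset.mem_univ c₀⟩
  have hy₀' : ∀ y, f y₀ ≤ f y := fun y => hy₀ y (Finset.mem_univ y)
  by_cases h : ∃ c ∈ C, f c = f y₀
  · obtain ⟨c, hc, hfc⟩ := h
    exact ⟨c, hc, fun y => hfc ▸ hy₀' y⟩
  · exfalso
    set S : Set E := {y | f y = f y₀} with hSdef
    have hclosed : ∀ a ∈ S, ∀ b, 0 < p a b → b ∈ S := by
      intro a ha b hpb
      have haC : a ∉ C := fun hac => h ⟨a, hac, ha⟩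
      have heq : ∑ t, p a t * f y₀ = ∑ t, p a t * f t := by
        rw [← Finset.sum_mul, hrow, one_mul, ← hf a haC, ha]
      have hle : ∀ t ∈ Finset.univ, p a t * f y₀ ≤ p a t * f t :=
        fun t _ => mul_le_mul_of_nonneg_left (hy₀' t) (hnn a t)
      have := (Finset.sum_eq_sum_iff_of_le hle).mp heq b (Finset.mem_univ b)
      exact (mul_left_cancel₀ hpb.ne' this.symm)
    obtain ⟨n, hn⟩ := hirr y₀ c₀
    exact h ⟨c₀, hc₀, closed_reach p hnn S hclosed n y₀ c₀ rfl hn⟩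

/-- For an irreducible Markov chain on a finite state space `E`, disjoint `A, B ⊆ E`
(not both empty) and `x ∉ A ∪ B`:
`P_x[H_A < H_B] = P_x[H_A < H⁺_{B ∪ {x}}] / P_x[H_{A ∪ B} < H⁺_x]`.
Here `P_x[H_A < H⁺_{B∪{x}}] = ∑_y p(x,y) P_y[H_A < H_{B∪{x}}]` and
`P_x[H_{A∪B} < H⁺_x] = ∑_y p(x,y) P_y[H_{A∪B} < H_x]`. -/
theorem hitting_ratio_identity {E : Type*} [Fintype E] [DecidableEq E]
    (p : Matrix E E ℝ) (hnn : ∀ x y, 0 ≤ p x y) (hrow : ∀ x, ∑ y, p x y = 1)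
    (hirr : ∀ x y : E, ∃ n : ℕ, 0 < (p ^ n) x y)
    (A B : Finset E) (hAB : Disjoint A B) (x : E) (hx : x ∉ A ∪ B)
    (hne : (A ∪ B).Nonempty)
    (u w z : E → ℝ)
    (hu : IsHittingProb p A B u)
    (hw : IsHittingProb p A (insert x B) w)
    (hz : IsHittingProb p (A ∪ B) {x} z) :
    u x = (∑ y, p x y * w y) / (∑ y, p x y * z y) := by
  have hxA : x ∉ A := fun h => hx (Finset.mem_union_left B h)
  have hxB : x ∉ B := fun h => hx (Finset.mem_union_right A h)
  -- boundary values of z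
  have hz1 : ∀ y ∈ A ∪ B, z y = 1 := hz.1
  have hzx : z x = 0 := hz.2.1 x (Finset.mem_singleton_self x) hx
  have hzh : ∀ y, y ∉ A ∪ B → y ≠ x → z y = ∑ t, p y t * z t :=
    fun y h1 h2 => hz.2.2 y h1 (by simpa using h2)
  -- z is nonnegative (minimum principle)
  have hznn : ∀ y, 0 ≤ z y := by
    obtain ⟨c, hc, hcmin⟩ := boundary_min p hnn hrow hirr (A ∪ B ∪ {x})
      ⟨x, by simp⟩ z (by
        intro y hy
        simp only [Finset.mem_union, Finset.mem_singleton, not_or] at hy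
        exact hzh y (by simp [Finset.mem_union, hy.1.1, hy.1.2]) hy.2)
    intro y
    refine le_trans ?_ (hcmin y)
    simp only [Finset.mem_union, Finset.mem_singleton] at hc
    rcases hc with h | h
    · rw [hz1 c (Finset.mem_union.mpr (by tauto))]; norm_num
    · rw [h, hzx]
  set Z := ∑ y, p x y * z y with hZdef
  have hZnn : 0 ≤ Z := Finset.sum_nonneg fun t _ => mul_nonneg (hnn x t) (hznn t)
  -- Z ≠ 0
  have hZpos : Z ≠ 0 := by
    intro hZ0
    set T : Set E := {y | z y = 0} with hTdef
    have hTAB : ∀ a ∈ T, a ∉ A ∪ B := by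
      intro a ha hab
      have := hz1 a hab
      rw [ha] at this; norm_num at this
    have hclosed : ∀ a ∈ T, ∀ b, 0 < p a b → b ∈ T := by
      intro a ha b hpb
      have key : ∑ t, p a t * z t = 0 → b ∈ T := by
        intro hsum
        have := (Finset.sum_eq_zero_iff_of_nonneg
          (fun t _ => mul_nonneg (hnn a t) (hznn t))).mp hsum b (Finset.mem_univ b)
        exact mul_left_cancel₀ hpb.ne' (by rw [this, mul_zero])
      by_cases hax : a = x
      · subst hax; exact key hZ0
      · exact key (by rw [← hzh a (hTAB a ha) hax]; exact ha)
    obtain ⟨c, hc⟩ := hne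
    obtain ⟨n, hn⟩ := hirr x c
    have : c ∈ T := closed_reach p hnn T hclosed n x c hzx hn
    exact hTAB c this hc
  -- the combination f := u - w - u x * (1 - z) vanishes on A ∪ B ∪ {x} and is harmonic off it
  set f : E → ℝ := fun y => u y - w y - u x * (1 - z y) with hfdef
  have hfC : ∀ y ∈ A ∪ B ∪ {x}, f y = 0 := by
    intro y hy
    simp only [Finset.mem_union, Finset.mem_singleton] at hy
    rcases hy with (hyA | hyB) | hyx
    · have h1 : u y = 1 := hu.1 y hyA
      have h2 : w y = 1 := hw.1 y hyA
      have h3 : z y = 1 := hz1 y (Finset.mem_union_left B hyA)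
      simp [hfdef, h1, h2, h3]
    · have hyA : y ∉ A := Finset.disjoint_right.mp hAB hyB
      have h1 : u y = 0 := hu.2.1 y hyB hyA
      have h2 : w y = 0 := hw.2.1 y (Finset.mem_insert_of_mem hyB) hyA
      have h3 : z y = 1 := hz1 y (Finset.mem_union_right A hyB)
      simp [hfdef, h1, h2, h3]
    · subst hyx
      have h2 : w y = 0 := hw.2.1 y (Finset.mem_insert_self y B) hxA
      simp [hfdef, h2, hzx]
  have hfh : ∀ y, y ∉ A ∪ B ∪ {x} → f y = ∑ t, p y t * f t := by
    intro y hy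
    simp only [Finset.mem_union, Finset.mem_singleton, not_or] at hy
    obtain ⟨⟨hyA, hyB⟩, hyx⟩ := hy
    have h1 : u y = ∑ t, p y t * u t := hu.2.2 y hyA hyB
    have h2 : w y = ∑ t, p y t * w t := hw.2.2 y hyA (by simp [hyx, hyB])
    have h3 : z y = ∑ t, p y t * z t := hzh y (by simp [hyA, hyB]) hyx
    have hexp : ∀ t, p y t * f t
        = p y t * u t - p y t * w t - u x * (p y t - p y t * z t) := by
      intro t; simp only [hfdef]; ring
    rw [Finset.sum_congr rfl (fun t _ => hexp t)]
    rw [Finset.sum_sub_distrib, Finset.sum_sub_distrib, ← Finset.mul_sum,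
      Finset.sum_sub_distrib, hrow, ← h1, ← h2, ← h3]
  -- f = 0 everywhere by min principle applied to f and -f
  have hCne : (A ∪ B ∪ {x}).Nonempty := ⟨x, by simp⟩
  have hf0 : ∀ y, f y = 0 := by
    obtain ⟨c, hc, hcmin⟩ := boundary_min p hnn hrow hirr _ hCne f hfh
    obtain ⟨c', hc', hcmax⟩ := boundary_min p hnn hrow hirr _ hCne (fun y => -f y) (by
      intro y hy
      have := hfh y hy
      simp only [mul_neg, Finset.sum_neg_distrib, ← this])
    intro y
    have h1 : 0 ≤ f y := (hfC c hc) ▸ hcmin y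
    have h2 : f y ≤ 0 := by
      have := hcmax y
      rw [hfC c' hc'] at this
      simpa using this
    linarith
  -- conclude at x using harmonicity of u
  have hux : u x = ∑ t, p x t * u t := hu.2.2 x hxA hxB
  have huval : ∀ t, u t = w t + u x * (1 - z t) := by
    intro t
    have := hf0 t
    simp only [hfdef] at this
    linarith
  have h1 : ∑ t, p x t * u t
      = ∑ t, (p x t * w t + u x * (p x t - p x t * z t)) :=
    Finset.sum_congr rfl (fun t _ => by rw [huval t]; ring)
  have h2 : u x = (∑ t, p x t * w t) + u x * (1 - Z) := by
    conv_lhs => rw [hux]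
    rw [h1, Finset.sum_add_distrib, ← Finset.mul_sum,
      Finset.sum_sub_distrib, hrow, hZdef]
  rw [eq_div_iff hZpos]
  linear_combination h2
end

section
/- Let σ ∈ {−1,0}^{ℤ²} be a configuration equal to −1 outside a finite set, and suppose the set A(σ) = {x : σ(x) = 0} has exactly n₀(n₀+1) points but is not a (translate of an) n₀ × (n₀+1) rectangle, where n₀ = ⌊2/h⌋, 0 < h < 1. Let ζ be a configuration whose 0-set is an n₀ × (n₀+1) rectangle. Then H(σ) ≥ H(ζ) + 2, where H is the Blume-Capel energy relative to the all −1 configuration. -/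
/-- `A` is a translate of a `p × q` rectangle in `ℤ²`. -/
def IsRectT (A : Finset (ℤ × ℤ)) (p q : ℕ) : Prop :=
  ∃ x0 y0 : ℤ, A = Finset.Ico x0 (x0 + (p : ℤ)) ×ˢ Finset.Ico y0 (y0 + (q : ℤ))

/-- Relative Blume-Capel energy of a `{-1,0}`-configuration with `0`-set `A`:
`H(σ) - H(-1) = P(A) - h|A|`. -/
noncomputable def relH (h : ℝ) (A : Finset (ℤ × ℤ)) : ℝ :=
  (perim A : ℝ) - h * A.card

def bp (S : Finset ℤ) : ℕ := (S.filter (fun s => s + 1 ∉ S)).card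
def bm (S : Finset ℤ) : ℕ := (S.filter (fun s => s - 1 ∉ S)).card

lemma bp_eq_bm (S : Finset ℤ) : bp S = bm S := by
  have h1 : bp S = S.card - (S.filter (fun s => s + 1 ∈ S)).card := by
    rw [bp, Finset.filter_not, Finset.card_sdiff_of_subset (Finset.filter_subset _ _)]
  have h2 : bm S = S.card - (S.filter (fun s => s - 1 ∈ S)).card := by
    rw [bm, Finset.filter_not, Finset.card_sdiff_of_subset (Finset.filter_subset _ _)]
  have h3 : (S.filter (fun s => s + 1 ∈ S)).card = (S.filter (fun s => s - 1 ∈ S)).card := by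
    apply Finset.card_bij (fun a _ => a + 1)
    · intro a ha; simp only [Finset.mem_filter] at ha ⊢
      constructor
      · exact ha.2
      · simpa using ha.1
    · intro a ha b hb hab; omega
    · intro b hb; simp only [Finset.mem_filter] at hb
      exact ⟨b - 1, by simp only [Finset.mem_filter]; constructor; exact hb.2; simpa using hb.1, by ring⟩
  rw [h1, h2, h3]

lemma bp_pos (S : Finset ℤ) (hS : S.Nonempty) : 1 ≤ bp S := by
  rw [bp, Nat.one_le_iff_ne_zero, ← Nat.pos_iff_ne_zero, Finset.card_pos]
  refine ⟨S.max' hS, ?_⟩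
  simp only [Finset.mem_filter]
  refine ⟨S.max'_mem hS, fun hc => ?_⟩
  have := S.le_max' _ hc; omega

lemma bp_one_interval (S : Finset ℤ) (hS : S.Nonempty) (h1 : bp S = 1) :
    S = Finset.Ico (S.min' hS) (S.min' hS + S.card) := by
  have hIcc : S = Finset.Icc (S.min' hS) (S.max' hS) := by
    apply Finset.Subset.antisymm
    · intro t ht
      simp only [Finset.mem_Icc]
      exact ⟨S.min'_le _ ht, S.le_max' _ ht⟩
    · intro t ht
      simp only [Finset.mem_Icc] at ht
      by_contra htS
      -- u = max of elements ≤ t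
      have hne : (S.filter (fun s => s ≤ t)).Nonempty :=
        ⟨S.min' hS, by simp [S.min'_mem hS, ht.1]⟩
      set u := (S.filter (fun s => s ≤ t)).max' hne with hu
      have huS : u ∈ S ∧ u ≤ t := by
        have h := (S.filter (fun s => s ≤ t)).max'_mem hne
        rw [Finset.mem_filter] at h; exact h
      have hut : u < t := lt_of_le_of_ne huS.2 (fun he => htS (he ▸ huS.1))
      have hu1 : u + 1 ∉ S := by
        intro hc
        have : u + 1 ∈ S.filter (fun s => s ≤ t) := by simp [hc]; omega
        have := (S.filter (fun s => s ≤ t)).le_max' _ this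
        omega
      have hmax1 : S.max' hS + 1 ∉ S := fun hc => by have := S.le_max' _ hc; omega
      have hsub : ({u, S.max' hS} : Finset ℤ) ⊆ S.filter (fun s => s + 1 ∉ S) := by
        intro z hz
        simp only [Finset.mem_insert, Finset.mem_singleton] at hz
        rcases hz with rfl | rfl
        · simp [huS.1, hu1]
        · simp [S.max'_mem hS, hmax1]
      have hune : u ≠ S.max' hS := by
        intro he
        have := S.le_max' _ huS.1
        have : t ≤ S.max' hS := ht.2
        omega
      have h2 : 2 ≤ (S.filter (fun s => s + 1 ∉ S)).card := by
        calc 2 = ({u, S.max' hS} : Finset ℤ).card := by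
                rw [Finset.card_insert_of_notMem (by simpa using hune)]; rfl
          _ ≤ _ := Finset.card_le_card hsub
      rw [bp] at h1; omega
  have hcard : S.card = (S.max' hS - S.min' hS + 1).toNat := by
    conv_lhs => rw [hIcc]
    rw [Int.card_Icc]
    omega
  have hle : S.min' hS ≤ S.max' hS := S.min'_le _ (S.max'_mem hS)
  have hcZ : (S.card : ℤ) = S.max' hS - S.min' hS + 1 := by rw [hcard]; omega
  calc S = Finset.Icc (S.min' hS) (S.max' hS) := hIcc
    _ = Finset.Ico (S.min' hS) (S.min' hS + S.card) := by
        ext t; simp only [Finset.mem_Icc, Finset.mem_Ico]; omega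

lemma bp_Ico (a b : ℤ) (hab : a < b) : bp (Finset.Ico a b) = 1 := by
  rw [bp]
  have : (Finset.Ico a b).filter (fun s => s + 1 ∉ Finset.Ico a b) = {b - 1} := by
    ext s
    simp only [Finset.mem_filter, Finset.mem_Ico, Finset.mem_singleton]
    omega
  rw [this]; rfl

def rowS (A : Finset (ℤ × ℤ)) (y : ℤ) : Finset ℤ :=
  (A.filter (fun p => p.2 = y)).image Prod.fst
def colS (A : Finset (ℤ × ℤ)) (x : ℤ) : Finset ℤ :=
  (A.filter (fun p => p.1 = x)).image Prod.snd

lemma mem_rowS {A : Finset (ℤ × ℤ)} {y s : ℤ} : s ∈ rowS A y ↔ (s, y) ∈ A := by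
  simp only [rowS, Finset.mem_image, Finset.mem_filter]
  constructor
  · rintro ⟨p, ⟨hp, hp2⟩, hp1⟩
    rwa [show (s, y) = p from by rw [← hp1, ← hp2]]
  · intro h; exact ⟨(s, y), ⟨h, rfl⟩, rfl⟩

lemma mem_colS {A : Finset (ℤ × ℤ)} {x t : ℤ} : t ∈ colS A x ↔ (x, t) ∈ A := by
  simp only [colS, Finset.mem_image, Finset.mem_filter]
  constructor
  · rintro ⟨p, ⟨hp, hp1⟩, hp2⟩
    rwa [show (x, t) = p from by rw [← hp1, ← hp2]]
  · intro h; exact ⟨(x, t), ⟨h, rfl⟩, rfl⟩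

lemma row_sum (A : Finset (ℤ × ℤ)) (y : ℤ) (f : ℤ → ℕ) :
    ∑ s ∈ rowS A y, f s = ∑ p ∈ A.filter (fun p => p.2 = y), f p.1 := by
  unfold rowS
  exact Finset.sum_image (fun p hp q hq hpq => by
    simp only [Finset.mem_coe, Finset.mem_filter] at hp hq
    exact Prod.ext hpq (hp.2.trans hq.2.symm))

lemma col_sum (A : Finset (ℤ × ℤ)) (z : ℤ) (f : ℤ → ℕ) :
    ∑ s ∈ colS A z, f s = ∑ p ∈ A.filter (fun p => p.1 = z), f p.2 := by
  unfold colS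
  exact Finset.sum_image (fun p hp q hq hpq => by
    simp only [Finset.mem_coe, Finset.mem_filter] at hp hq
    exact Prod.ext (hp.2.trans hq.2.symm) hpq)

lemma perim_pointwise (A : Finset (ℤ × ℤ)) (x : ℤ × ℤ) :
    ((nbrs x).filter (fun y => y ∉ A)).card =
      (if (x.1 + 1, x.2) ∉ A then 1 else 0) + (if (x.1 - 1, x.2) ∉ A then 1 else 0)
      + (if (x.1, x.2 + 1) ∉ A then 1 else 0) + (if (x.1, x.2 - 1) ∉ A then 1 else 0) := by
  rw [Finset.card_filter, nbrs]
  rw [show ({(x.1 + 1, x.2), (x.1 - 1, x.2), (x.1, x.2 + 1), (x.1, x.2 - 1)} : Finset (ℤ × ℤ)) =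
      insert (x.1 + 1, x.2) (insert (x.1 - 1, x.2) (insert (x.1, x.2 + 1) {(x.1, x.2 - 1)})) from rfl]
  rw [Finset.sum_insert (by simp [Prod.ext_iff] <;> omega),
      Finset.sum_insert (by simp [Prod.ext_iff] <;> omega),
      Finset.sum_insert (by simp [Prod.ext_iff] <;> omega),
      Finset.sum_singleton]
  ring

lemma sum_dir_row (A : Finset (ℤ × ℤ)) :
    ∑ x ∈ A, (if (x.1 + 1, x.2) ∉ A then 1 else 0) = ∑ y ∈ A.image Prod.snd, bp (rowS A y) := by
  rw [← Finset.sum_fiberwise_of_maps_to (g := Prod.snd) (fun x hx => Finset.mem_image_of_mem _ hx)]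
  apply Finset.sum_congr rfl
  intro y _
  rw [bp, Finset.card_filter, row_sum]
  apply Finset.sum_congr rfl
  intro p hp
  simp only [Finset.mem_filter] at hp
  congr 1
  rw [mem_rowS, hp.2]

lemma sum_dir_row' (A : Finset (ℤ × ℤ)) :
    ∑ x ∈ A, (if (x.1 - 1, x.2) ∉ A then 1 else 0) = ∑ y ∈ A.image Prod.snd, bm (rowS A y) := by
  rw [← Finset.sum_fiberwise_of_maps_to (g := Prod.snd) (fun x hx => Finset.mem_image_of_mem _ hx)]
  apply Finset.sum_congr rfl
  intro y _
  rw [bm, Finset.card_filter, row_sum]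
  apply Finset.sum_congr rfl
  intro p hp
  simp only [Finset.mem_filter] at hp
  congr 1
  rw [mem_rowS, hp.2]

lemma sum_dir_col (A : Finset (ℤ × ℤ)) :
    ∑ x ∈ A, (if (x.1, x.2 + 1) ∉ A then 1 else 0) = ∑ z ∈ A.image Prod.fst, bp (colS A z) := by
  rw [← Finset.sum_fiberwise_of_maps_to (g := Prod.fst) (fun x hx => Finset.mem_image_of_mem _ hx)]
  apply Finset.sum_congr rfl
  intro z _
  rw [bp, Finset.card_filter, col_sum]
  apply Finset.sum_congr rfl
  intro p hp
  simp only [Finset.mem_filter] at hp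
  congr 1
  rw [mem_colS, hp.2]

lemma sum_dir_col' (A : Finset (ℤ × ℤ)) :
    ∑ x ∈ A, (if (x.1, x.2 - 1) ∉ A then 1 else 0) = ∑ z ∈ A.image Prod.fst, bm (colS A z) := by
  rw [← Finset.sum_fiberwise_of_maps_to (g := Prod.fst) (fun x hx => Finset.mem_image_of_mem _ hx)]
  apply Finset.sum_congr rfl
  intro z _
  rw [bm, Finset.card_filter, col_sum]
  apply Finset.sum_congr rfl
  intro p hp
  simp only [Finset.mem_filter] at hp
  congr 1
  rw [mem_colS, hp.2]

lemma perim_decomp (A : Finset (ℤ × ℤ)) :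
    perim A = (∑ y ∈ A.image Prod.snd, (bp (rowS A y) + bm (rowS A y)))
            + (∑ z ∈ A.image Prod.fst, (bp (colS A z) + bm (colS A z))) := by
  rw [perim]
  calc ∑ x ∈ A, ((nbrs x).filter (fun y => y ∉ A)).card
      = ∑ x ∈ A, ((if (x.1 + 1, x.2) ∉ A then 1 else 0) + (if (x.1 - 1, x.2) ∉ A then 1 else 0)
        + (if (x.1, x.2 + 1) ∉ A then 1 else 0) + (if (x.1, x.2 - 1) ∉ A then 1 else 0)) :=
        Finset.sum_congr rfl (fun x _ => perim_pointwise A x)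
    _ = (∑ x ∈ A, (if (x.1 + 1, x.2) ∉ A then 1 else 0))
        + (∑ x ∈ A, (if (x.1 - 1, x.2) ∉ A then 1 else 0))
        + (∑ x ∈ A, (if (x.1, x.2 + 1) ∉ A then 1 else 0))
        + (∑ x ∈ A, (if (x.1, x.2 - 1) ∉ A then 1 else 0)) := by
          rw [← Finset.sum_add_distrib, ← Finset.sum_add_distrib, ← Finset.sum_add_distrib]
    _ = _ := by
          rw [sum_dir_row, sum_dir_row', sum_dir_col, sum_dir_col',
              Finset.sum_add_distrib, Finset.sum_add_distrib]
          ring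

lemma rowS_prod (C R : Finset ℤ) {y : ℤ} (hy : y ∈ R) : rowS (C ×ˢ R) y = C := by
  ext s; rw [mem_rowS, Finset.mem_product]; simp [hy]

lemma colS_prod (C R : Finset ℤ) {x : ℤ} (hx : x ∈ C) : colS (C ×ˢ R) x = R := by
  ext t; rw [mem_colS, Finset.mem_product]; simp [hx]

lemma image_fst_prod (C R : Finset ℤ) (hR : R.Nonempty) :
    (C ×ˢ R).image Prod.fst = C := by
  ext s
  simp only [Finset.mem_image, Finset.mem_product]
  constructor
  · rintro ⟨p, ⟨h1, _⟩, rfl⟩; exact h1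
  · intro hs; obtain ⟨t, ht⟩ := hR; exact ⟨(s, t), ⟨hs, ht⟩, rfl⟩

lemma image_snd_prod (C R : Finset ℤ) (hC : C.Nonempty) :
    (C ×ˢ R).image Prod.snd = R := by
  ext t
  simp only [Finset.mem_image, Finset.mem_product]
  constructor
  · rintro ⟨p, ⟨_, h2⟩, rfl⟩; exact h2
  · intro ht; obtain ⟨s, hs⟩ := hC; exact ⟨(s, t), ⟨hs, ht⟩, rfl⟩

lemma perim_prod (C R : Finset ℤ) (hC : C.Nonempty) (hR : R.Nonempty) :
    perim (C ×ˢ R) = R.card * (2 * bp C) + C.card * (2 * bp R) := by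
  rw [perim_decomp, image_fst_prod C R hR, image_snd_prod C R hC]
  have e1 : ∑ y ∈ R, (bp (rowS (C ×ˢ R) y) + bm (rowS (C ×ˢ R) y)) = R.card * (2 * bp C) := by
    calc ∑ y ∈ R, (bp (rowS (C ×ˢ R) y) + bm (rowS (C ×ˢ R) y))
        = ∑ _y ∈ R, 2 * bp C := Finset.sum_congr rfl (fun y hy => by
            rw [rowS_prod C R hy, ← bp_eq_bm C]; ring)
      _ = R.card * (2 * bp C) := by rw [Finset.sum_const, smul_eq_mul]
  have e2 : ∑ z ∈ C, (bp (colS (C ×ˢ R) z) + bm (colS (C ×ˢ R) z)) = C.card * (2 * bp R) := by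
    calc ∑ z ∈ C, (bp (colS (C ×ˢ R) z) + bm (colS (C ×ˢ R) z))
        = ∑ _z ∈ C, 2 * bp R := Finset.sum_congr rfl (fun z hz => by
            rw [colS_prod C R hz, ← bp_eq_bm R]; ring)
      _ = C.card * (2 * bp R) := by rw [Finset.sum_const, smul_eq_mul]
  rw [e1, e2]

lemma perim_rect (x0 y0 : ℤ) (p q : ℕ) (hp : 1 ≤ p) (hq : 1 ≤ q) :
    perim (Finset.Ico x0 (x0 + (p : ℤ)) ×ˢ Finset.Ico y0 (y0 + (q : ℤ))) = 2 * p + 2 * q := by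
  have hC : (Finset.Ico x0 (x0 + (p : ℤ))).Nonempty := by
    rw [Finset.nonempty_Ico]; omega
  have hR : (Finset.Ico y0 (y0 + (q : ℤ))).Nonempty := by
    rw [Finset.nonempty_Ico]; omega
  rw [perim_prod _ _ hC hR, bp_Ico _ _ (by omega), bp_Ico _ _ (by omega),
      Int.card_Ico, Int.card_Ico,
      show x0 + (p : ℤ) - x0 = (p : ℤ) from by ring,
      show y0 + (q : ℤ) - y0 = (q : ℤ) from by ring,
      Int.toNat_natCast, Int.toNat_natCast]
  ring

lemma card_rect (x0 y0 : ℤ) (p q : ℕ) :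
    (Finset.Ico x0 (x0 + (p : ℤ)) ×ˢ Finset.Ico y0 (y0 + (q : ℤ))).card = p * q := by
  rw [Finset.card_product, Int.card_Ico, Int.card_Ico,
      show x0 + (p : ℤ) - x0 = (p : ℤ) from by ring,
      show y0 + (q : ℤ) - y0 = (q : ℤ) from by ring,
      Int.toNat_natCast, Int.toNat_natCast]

lemma key (n : ℕ) (hn : 1 ≤ n) (A : Finset (ℤ × ℤ)) (hcard : A.card = n * (n + 1))
    (hnrect : ¬(IsRectT A n (n + 1) ∨ IsRectT A (n + 1) n)) :
    4 * n + 4 ≤ perim A := by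
  by_contra hcon
  push_neg at hcon
  have hperim : perim A ≤ 4 * n + 3 := by omega
  have hAne : A.Nonempty := by
    rw [← Finset.card_pos, hcard]
    exact Nat.mul_pos (by omega) (by omega)
  have hCne : (A.image Prod.fst).Nonempty := hAne.image _
  have hRne : (A.image Prod.snd).Nonempty := hAne.image _
  have hcpos : 1 ≤ (A.image Prod.fst).card := Finset.card_pos.mpr hCne
  have hrpos : 1 ≤ (A.image Prod.snd).card := Finset.card_pos.mpr hRne
  have hrow_ne : ∀ y ∈ A.image Prod.snd, (rowS A y).Nonempty := by
    intro y hy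
    obtain ⟨p, hp, rfl⟩ := Finset.mem_image.mp hy
    exact ⟨p.1, mem_rowS.mpr (by simpa using hp)⟩
  have hcol_ne : ∀ z ∈ A.image Prod.fst, (colS A z).Nonempty := by
    intro z hz
    obtain ⟨p, hp, rfl⟩ := Finset.mem_image.mp hz
    exact ⟨p.2, mem_colS.mpr (by simpa using hp)⟩
  have hlow : 2 * (A.image Prod.snd).card + 2 * (A.image Prod.fst).card ≤ perim A := by
    rw [perim_decomp]
    have h1 : 2 * (A.image Prod.snd).card
        ≤ ∑ y ∈ A.image Prod.snd, (bp (rowS A y) + bm (rowS A y)) := by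
      calc 2 * (A.image Prod.snd).card = ∑ _y ∈ A.image Prod.snd, 2 := by
            rw [Finset.sum_const, smul_eq_mul]; ring
        _ ≤ _ := Finset.sum_le_sum (fun y hy => by
            have := bp_pos _ (hrow_ne y hy)
            have h2 := bp_eq_bm (rowS A y); omega)
    have h2 : 2 * (A.image Prod.fst).card
        ≤ ∑ z ∈ A.image Prod.fst, (bp (colS A z) + bm (colS A z)) := by
      calc 2 * (A.image Prod.fst).card = ∑ _z ∈ A.image Prod.fst, 2 := by
            rw [Finset.sum_const, smul_eq_mul]; ring
        _ ≤ _ := Finset.sum_le_sum (fun z hz => by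
            have := bp_pos _ (hcol_ne z hz)
            have h2 := bp_eq_bm (colS A z); omega)
    omega
  have hsum : (A.image Prod.snd).card + (A.image Prod.fst).card ≤ 2 * n + 1 := by omega
  have hprod_sub : A ⊆ A.image Prod.fst ×ˢ A.image Prod.snd := Finset.subset_product
  have hcr : n * (n + 1) ≤ (A.image Prod.fst).card * (A.image Prod.snd).card := by
    calc n * (n + 1) = A.card := hcard.symm
      _ ≤ (A.image Prod.fst ×ˢ A.image Prod.snd).card := Finset.card_le_card hprod_sub
      _ = _ := Finset.card_product _ _
  obtain ⟨c, hc⟩ : ∃ c, (A.image Prod.fst).card = c := ⟨_, rfl⟩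
  obtain ⟨r, hr⟩ : ∃ r, (A.image Prod.snd).card = r := ⟨_, rfl⟩
  rw [hc] at hcpos hcr hsum
  rw [hr] at hrpos hcr hsum
  have Hc : (1 : ℤ) ≤ c := by exact_mod_cast hcpos
  have Hr : (1 : ℤ) ≤ r := by exact_mod_cast hrpos
  have Hn : (1 : ℤ) ≤ n := by exact_mod_cast hn
  have Hsum : (r : ℤ) + c ≤ 2 * n + 1 := by exact_mod_cast hsum
  have Hcr : (n : ℤ) * (n + 1) ≤ c * r := by exact_mod_cast hcr
  have Hcn : (n : ℤ) ≤ c := by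
    by_contra hx
    push_neg at hx
    have h1 : (r : ℤ) ≤ 2 * n + 1 - c := by linarith
    have h2 : (c : ℤ) * r ≤ c * (2 * n + 1 - c) :=
      mul_le_mul_of_nonneg_left h1 (by linarith)
    nlinarith
  have Hrn : (n : ℤ) ≤ r := by
    by_contra hx
    push_neg at hx
    have h1 : (c : ℤ) ≤ 2 * n + 1 - r := by linarith
    have h2 : (r : ℤ) * c ≤ r * (2 * n + 1 - r) :=
      mul_le_mul_of_nonneg_left h1 (by linarith)
    nlinarith
  have hcn : n ≤ c := by exact_mod_cast Hcn
  have hrn : n ≤ r := by exact_mod_cast Hrn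
  have hcases : (c = n ∧ r = n + 1) ∨ (c = n + 1 ∧ r = n) := by
    rcases Nat.lt_or_ge c (n + 1) with hx | hx
    · left
      refine ⟨by omega, ?_⟩
      have hceq : (c : ℤ) = n := by exact_mod_cast (show c = n by omega)
      have hz : (n : ℤ) + 1 ≤ r := by nlinarith
      have : n + 1 ≤ r := by exact_mod_cast hz
      omega
    · right
      exact ⟨by omega, by omega⟩
  have hcrn : c * r = n * (n + 1) := by
    rcases hcases with ⟨h1, h2⟩ | ⟨h1, h2⟩ <;> rw [h1, h2] <;> ring
  have hsumeq : r + c = 2 * n + 1 := by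
    rcases hcases with ⟨h1, h2⟩ | ⟨h1, h2⟩ <;> omega
  have hAeq : A = A.image Prod.fst ×ˢ A.image Prod.snd := by
    apply Finset.eq_of_subset_of_card_le hprod_sub
    rw [Finset.card_product, hc, hr, hcrn, hcard]
  have hpp : perim A = r * (2 * bp (A.image Prod.fst)) + c * (2 * bp (A.image Prod.snd)) := by
    conv_lhs => rw [hAeq]
    rw [perim_prod _ _ hCne hRne, hc, hr]
  have hbpC : 1 ≤ bp (A.image Prod.fst) := bp_pos _ hCne
  have hbpR : 1 ≤ bp (A.image Prod.snd) := bp_pos _ hRne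
  have hbpC1 : bp (A.image Prod.fst) = 1 := by
    by_contra hx
    have h2le : 2 ≤ bp (A.image Prod.fst) := by omega
    have h4r : r * 4 ≤ r * (2 * bp (A.image Prod.fst)) :=
      Nat.mul_le_mul_left r (by omega)
    have h2c : c * 2 ≤ c * (2 * bp (A.image Prod.snd)) :=
      Nat.mul_le_mul_left c (by omega)
    omega
  have hbpR1 : bp (A.image Prod.snd) = 1 := by
    by_contra hx
    have h2le : 2 ≤ bp (A.image Prod.snd) := by omega
    have h4r : r * 2 ≤ r * (2 * bp (A.image Prod.fst)) :=
      Nat.mul_le_mul_left r (by omega)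
    have h2c : c * 4 ≤ c * (2 * bp (A.image Prod.snd)) :=
      Nat.mul_le_mul_left c (by omega)
    omega
  have hCint := bp_one_interval _ hCne hbpC1
  have hRint := bp_one_interval _ hRne hbpR1
  apply hnrect
  rw [hc] at hCint
  rw [hr] at hRint
  have hrect : IsRectT A c r := by
    refine ⟨(A.image Prod.fst).min' hCne, (A.image Prod.snd).min' hRne, ?_⟩
    conv_lhs => rw [hAeq]
    congr 1
  rcases hcases with ⟨h1, h2⟩ | ⟨h1, h2⟩
  · left; rw [h1, h2] at hrect; exact hrect
  · right; rw [h1, h2] at hrect; exact hrect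

/-- If the `0`-set `A` of a `{-1,0}`-configuration `σ` has exactly `n₀(n₀+1)` points but is
not a translate of an `n₀ × (n₀+1)` rectangle, and `B` is the `0`-set of a configuration `ζ`
which is such a rectangle, then `H(σ) ≥ H(ζ) + 2`. -/
theorem energy_gap_nonrectangular (h : ℝ) (h0 : 0 < h) (h1 : h < 1) (n₀ : ℕ)
    (hn₀ : n₀ = ⌊2 / h⌋₊) (A : Finset (ℤ × ℤ)) (hcard : A.card = n₀ * (n₀ + 1))
    (hnrect : ¬(IsRectT A n₀ (n₀ + 1) ∨ IsRectT A (n₀ + 1) n₀))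
    (B : Finset (ℤ × ℤ)) (hB : IsRectT B n₀ (n₀ + 1)) :
    relH h B + 2 ≤ relH h A := by
  have hn1 : 1 ≤ n₀ := by
    rw [hn₀]
    apply Nat.le_floor
    rw [Nat.cast_one, le_div_iff₀ h0]
    linarith
  obtain ⟨x0, y0, hBeq⟩ := hB
  have hBcard : B.card = n₀ * (n₀ + 1) := by rw [hBeq, card_rect]
  have hBperim : perim B = 4 * n₀ + 2 := by
    rw [hBeq, perim_rect _ _ _ _ hn1 (by omega)]
    ring
  have hAperim : 4 * n₀ + 4 ≤ perim A := key n₀ hn1 A hcard hnrect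
  unfold relH
  rw [hcard, hBcard, hBperim]
  have : ((4 * n₀ + 2 : ℕ) : ℝ) + 2 ≤ (perim A : ℝ) := by
    have : ((4 * n₀ + 4 : ℕ) : ℝ) ≤ (perim A : ℝ) := by exact_mod_cast hAperim
    push_cast at this ⊢
    linarith
  linarith
end
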